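/- Let k ≥ 4 and r₂, r₃, …, r_k ≥ 1, and let H be the join of the complete graph K₂ with the disjoint union of the complete graphs K_{r₂}, …, K_{r_k}. Then the eccentricity matrix ε(H) has exactly one positive eigenvalue. -/

import Mathlib

open Finset Polynomial

noncomputable def ecc {V : Type*} [Fintype V] (G : SimpleGraph V) (u : V) : ℕ :=
  Finset.univ.sup (G.dist u)

noncomputable def eccMatrix {V : Type*} [Fintype V] (G : SimpleGraph V) :
    Matrix V V ℝ := fun u v =>
  if G.dist u v = min (ecc G u) (ecc G v) then (G.dist u v : ℝ) else 0

theorem eccMatrix_isHermitian {V : Type*} [Fintype V] (G : SimpleGraph V) :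
    (eccMatrix G).IsHermitian := by
  unfold Matrix.IsHermitian
  ext u v
  simp only [Matrix.conjTranspose_apply, eccMatrix, star_trivial]
  rw [SimpleGraph.dist_comm, min_comm]

/-- Number of positive eigenvalues (with multiplicity) of a real symmetric matrix. -/
noncomputable def posEigCount {V : Type*} [Fintype V] [DecidableEq V]
    {A : Matrix V V ℝ} (hA : A.IsHermitian) : ℕ :=
  (Finset.univ.filter fun i => 0 < hA.eigenvalues i).card

/-- The join of two simple graphs: disjoint union plus all edges in between. -/
def graphJoin {α β : Type*} (G : SimpleGraph α) (H : SimpleGraph β) :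
    SimpleGraph (α ⊕ β) where
  Adj x y := match x, y with
    | Sum.inl a, Sum.inl b => G.Adj a b
    | Sum.inr a, Sum.inr b => H.Adj a b
    | _, _ => True
  symm := ⟨by rintro (a|a) (b|b) h <;> first | exact G.adj_symm h | exact H.adj_symm h | trivial⟩
  loopless := ⟨by rintro (a|a) h <;> first | exact G.irrefl h | exact H.irrefl h⟩

/-- The disjoint union of two simple graphs. -/
def graphSum {α β : Type*} (G : SimpleGraph α) (H : SimpleGraph β) :
    SimpleGraph (α ⊕ β) where
  Adj x y := match x, y with
    | Sum.inl a, Sum.inl b => G.Adj a b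
    | Sum.inr a, Sum.inr b => H.Adj a b
    | _, _ => False
  symm := ⟨by rintro (a|a) (b|b) h <;> first | exact G.adj_symm h | exact H.adj_symm h | trivial⟩
  loopless := ⟨by rintro (a|a) h <;> first | exact G.irrefl h | exact H.irrefl h⟩

/-- Disjoint union of blocks indexed by `ι`; block `i` has `r i` vertices and is a
clique when `P i` holds and a coclique (independent set) otherwise. -/
def blocksGraph {ι : Type*} (r : ι → ℕ) (P : ι → Prop) :
    SimpleGraph (Σ i, Fin (r i)) where
  Adj x y := x ≠ y ∧ x.1 = y.1 ∧ P x.1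
  symm := ⟨by rintro x y ⟨h1, h2, h3⟩; exact ⟨h1.symm, h2.symm, h2 ▸ h3⟩⟩
  loopless := ⟨fun x h => h.1 rfl⟩

/-!
All distances in `H` are at most `2`, so `ε(H)` has entries `1` between the two centre vertices and
between the centre and the leaves, `2` between vertices of distinct leaves, and `0` otherwise.
With `w = (1, 1 | 2, …, 2)`, `d = (1, -1 | 0, …, 0)` and `𝟙ᵢ` the indicator of the `i`-th leaf,
`2 ε(H) = w wᵀ - d dᵀ - 4 ∑ᵢ 𝟙ᵢ 𝟙ᵢᵀ`. Hence the quadratic form of `ε(H)` is nonpositive on the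
hyperplane `w ⬝ᵥ z = 0`, which leaves room for at most one positive eigenvalue; and since
`ε(H)` is nonzero with zero trace, it has at least one.
-/

open Matrix

lemma dotProduct_vecMulVec_self_mulVec {n R : Type*} [Fintype n] [CommSemiring R]
    (a z : n → R) : z ⬝ᵥ (vecMulVec a a *ᵥ z) = (a ⬝ᵥ z) ^ 2 := by
  rw [vecMulVec_mulVec, op_smul_eq_smul, dotProduct_smul, smul_eq_mul, dotProduct_comm, sq]

namespace Matrix.IsHermitian

variable {n : Type*} [Fintype n] [DecidableEq n] {A : Matrix n n ℝ}

lemma eigenvectorBasis_dotProduct (hA : A.IsHermitian) (i j : n) :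
    ⇑(hA.eigenvectorBasis i) ⬝ᵥ ⇑(hA.eigenvectorBasis j) = if i = j then 1 else 0 := by
  rw [dotProduct_comm]
  simpa [EuclideanSpace.inner_eq_star_dotProduct] using
    orthonormal_iff_ite.mp hA.eigenvectorBasis.orthonormal i j

lemma posEigCount_pos_of_trace_eq_zero (hA : A.IsHermitian) (hA0 : A ≠ 0) (htr : A.trace = 0) :
    0 < posEigCount hA := by
  obtain ⟨i, hi⟩ := Function.ne_iff.mp (mt hA.eigenvalues_eq_zero_iff.mp hA0)
  refine Finset.card_pos.mpr ?_
  by_contra! hempty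
  have hnonpos (j : n) : hA.eigenvalues j ≤ 0 :=
    not_lt.mp (Finset.filter_eq_empty_iff.mp hempty (Finset.mem_univ j))
  have hsum : ∑ j, hA.eigenvalues j = 0 := by simpa [hA.trace_eq_sum_eigenvalues] using htr
  exact hi ((Finset.sum_eq_zero_iff_of_nonpos fun j _ => hnonpos j).mp hsum i (Finset.mem_univ i))

/-- Two orthonormal eigenvectors with positive eigenvalues span a plane on which the form is
positive definite; that plane meets every hyperplane `w ⬝ᵥ z = 0`. -/
lemma posEigCount_le_one_of_nonpos_on_hyperplane (hA : A.IsHermitian) (w : n → ℝ)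
    (hw : ∀ z, w ⬝ᵥ z = 0 → z ⬝ᵥ (A *ᵥ z) ≤ 0) : posEigCount hA ≤ 1 := by
  refine Finset.card_le_one.mpr fun i hi j hj => by_contra fun hij => ?_
  simp only [Finset.mem_filter, Finset.mem_univ, true_and] at hi hj
  set u : n → ℝ := ⇑(hA.eigenvectorBasis i)
  set v : n → ℝ := ⇑(hA.eigenvectorBasis j)
  have huu : u ⬝ᵥ u = 1 := by simpa using hA.eigenvectorBasis_dotProduct i i
  have hvv : v ⬝ᵥ v = 1 := by simpa using hA.eigenvectorBasis_dotProduct j j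
  have huv : u ⬝ᵥ v = 0 := by simpa [hij] using hA.eigenvectorBasis_dotProduct i j
  have hvu : v ⬝ᵥ u = 0 := by simpa [Ne.symm hij] using hA.eigenvectorBasis_dotProduct j i
  have hAu : A *ᵥ u = hA.eigenvalues i • u := hA.mulVec_eigenvectorBasis i
  have hAv : A *ᵥ v = hA.eigenvalues j • v := hA.mulVec_eigenvectorBasis j
  set z := (w ⬝ᵥ v) • u - (w ⬝ᵥ u) • v
  have hz : z ⬝ᵥ (A *ᵥ z) =
      (w ⬝ᵥ v) ^ 2 * hA.eigenvalues i + (w ⬝ᵥ u) ^ 2 * hA.eigenvalues j := by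
    simp only [z, mulVec_sub, mulVec_smul, hAu, hAv, sub_dotProduct, dotProduct_sub,
      smul_dotProduct, dotProduct_smul, huu, hvv, huv, hvu, smul_eq_mul]
    ring
  have hwz : w ⬝ᵥ z = 0 := by
    simp only [z, dotProduct_sub, dotProduct_smul, smul_eq_mul]
    ring
  have hwu : w ⬝ᵥ u = 0 := by
    have hle := hw z hwz
    rw [hz] at hle
    have hsq : (w ⬝ᵥ u) ^ 2 * hA.eigenvalues j ≤ 0 := by
      nlinarith [mul_nonneg (sq_nonneg (w ⬝ᵥ v)) hi.le]
    exact pow_eq_zero_iff two_ne_zero |>.mp <|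
      le_antisymm (nonpos_of_mul_nonpos_left hsq hj) (sq_nonneg _)
  have := hw u hwu
  rw [hAu, dotProduct_smul, huu, smul_eq_mul, mul_one] at this
  linarith

end Matrix.IsHermitian

open Sum

lemma SimpleGraph.dist_eq_two_of_mem_commonNeighbors {V : Type*} {G : SimpleGraph V}
    {u v w : V} (huv : u ≠ v) (hadj : ¬G.Adj u v) (hw : w ∈ G.commonNeighbors u v) :
    G.dist u v = 2 := by
  rw [SimpleGraph.dist, ENat.toNat_eq_iff two_ne_zero]
  exact SimpleGraph.edist_eq_two_iff.mpr ⟨huv, hadj, w, hw⟩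

lemma eccMatrix_apply_self {V : Type*} [Fintype V] (G : SimpleGraph V) (u : V) :
    eccMatrix G u u = 0 := by
  simp [eccMatrix]

lemma trace_eccMatrix {V : Type*} [Fintype V] (G : SimpleGraph V) : (eccMatrix G).trace = 0 :=
  Finset.sum_eq_zero fun u _ => eccMatrix_apply_self G u

section graphJoin

variable {α β : Type*} (G : SimpleGraph α) (H : SimpleGraph β)

lemma graphJoin_dist_inl_inr (a : α) (b : β) : (graphJoin G H).dist (inl a) (inr b) = 1 :=
  SimpleGraph.dist_eq_one_iff_adj.mpr trivial

lemma graphJoin_dist_inr_inl (b : β) (a : α) : (graphJoin G H).dist (inr b) (inl a) = 1 :=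
  SimpleGraph.dist_eq_one_iff_adj.mpr trivial

lemma top_graphJoin_dist_inl_inl [DecidableEq α] (a b : α) :
    (graphJoin ⊤ H).dist (inl a) (inl b) = if a = b then 0 else 1 := by
  split_ifs with h
  · rw [h, SimpleGraph.dist_self]
  · exact SimpleGraph.dist_eq_one_iff_adj.mpr h

lemma graphJoin_dist_inr_inr [Nonempty α] [DecidableEq β] [DecidableRel H.Adj] (x y : β) :
    (graphJoin G H).dist (inr x) (inr y) = if x = y then 0 else if H.Adj x y then 1 else 2 := by
  split_ifs with h hadj
  · rw [h, SimpleGraph.dist_self]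
  · exact SimpleGraph.dist_eq_one_iff_adj.mpr hadj
  · exact SimpleGraph.dist_eq_two_of_mem_commonNeighbors (inr_injective.ne h) hadj
      (w := inl (Classical.arbitrary α)) ⟨trivial, trivial⟩

end graphJoin

abbrev starMixedExtension {m : ℕ} (r : Fin m → ℕ) :
    SimpleGraph (Fin 2 ⊕ Σ i : Fin m, Fin (r i)) :=
  graphJoin ⊤ (blocksGraph r fun _ => True)

namespace starMixedExtension

variable {m : ℕ} {r : Fin m → ℕ}

lemma dist_inr_inr (x y : Σ i : Fin m, Fin (r i)) :
    (starMixedExtension r).dist (inr x) (inr y) =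
      if x = y then 0 else if x.1 = y.1 then 1 else 2 := by
  classical
  rw [graphJoin_dist_inr_inr]
  simp only [blocksGraph, and_true]
  split_ifs <;> simp_all

lemma ecc_inl [Nonempty (Σ i : Fin m, Fin (r i))] (a : Fin 2) :
    ecc (starMixedExtension r) (inl a) = 1 := by
  refine le_antisymm (Finset.sup_le ?_) ?_
  · rintro (b | y) -
    · rw [top_graphJoin_dist_inl_inl]; split_ifs <;> omega
    · rw [graphJoin_dist_inl_inr]
  · exact Finset.le_sup_of_le (Finset.mem_univ (inr (Classical.arbitrary _)))
      (graphJoin_dist_inl_inr _ _ _ _).ge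

lemma ecc_inr (hm : 2 ≤ m) (hr : ∀ i, 1 ≤ r i) (x : Σ i : Fin m, Fin (r i)) :
    ecc (starMixedExtension r) (inr x) = 2 := by
  refine le_antisymm (Finset.sup_le ?_) ?_
  · rintro (b | y) -
    · rw [graphJoin_dist_inr_inl]; omega
    · rw [dist_inr_inr]; split_ifs <;> omega
  · have : Nontrivial (Fin m) := Fin.nontrivial_iff_two_le.mpr hm
    obtain ⟨j, hj⟩ := exists_ne x.1
    refine Finset.le_sup_of_le (Finset.mem_univ (inr ⟨j, ⟨0, hr j⟩⟩)) ?_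
    rw [dist_inr_inr, if_neg (fun h => hj (congrArg Sigma.fst h).symm), if_neg hj.symm]

lemma eccMatrix_inl_inl (hm : 2 ≤ m) (hr : ∀ i, 1 ≤ r i) (a b : Fin 2) :
    eccMatrix (starMixedExtension r) (inl a) (inl b) = if a = b then 0 else 1 := by
  have : Nonempty (Σ i : Fin m, Fin (r i)) := ⟨⟨⟨0, by omega⟩, ⟨0, hr _⟩⟩⟩
  simp only [eccMatrix, top_graphJoin_dist_inl_inl, ecc_inl, min_self]
  split_ifs <;> simp_all

lemma eccMatrix_inl_inr (hm : 2 ≤ m) (hr : ∀ i, 1 ≤ r i) (a : Fin 2)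
    (x : Σ i : Fin m, Fin (r i)) :
    eccMatrix (starMixedExtension r) (inl a) (inr x) = 1 := by
  have : Nonempty (Σ i : Fin m, Fin (r i)) := ⟨x⟩
  simp [eccMatrix, graphJoin_dist_inl_inr, ecc_inl, ecc_inr hm hr]

lemma eccMatrix_inr_inl (hm : 2 ≤ m) (hr : ∀ i, 1 ≤ r i) (x : Σ i : Fin m, Fin (r i))
    (a : Fin 2) :
    eccMatrix (starMixedExtension r) (inr x) (inl a) = 1 := by
  have : Nonempty (Σ i : Fin m, Fin (r i)) := ⟨x⟩
  simp [eccMatrix, graphJoin_dist_inr_inl, ecc_inl, ecc_inr hm hr]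

lemma eccMatrix_inr_inr (hm : 2 ≤ m) (hr : ∀ i, 1 ≤ r i) (x y : Σ i : Fin m, Fin (r i)) :
    eccMatrix (starMixedExtension r) (inr x) (inr y) = if x.1 = y.1 then 0 else 2 := by
  simp only [eccMatrix, dist_inr_inr, ecc_inr hm hr, min_self]
  split_ifs <;> simp_all

def weight : Fin 2 ⊕ (Σ i : Fin m, Fin (r i)) → ℝ := Sum.elim 1 2

def centerDifference : Fin 2 ⊕ (Σ i : Fin m, Fin (r i)) → ℝ := Sum.elim ![1, -1] 0

def blockIndicator (i : Fin m) : Fin 2 ⊕ (Σ i : Fin m, Fin (r i)) → ℝ :=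
  Sum.elim 0 fun x => if x.1 = i then 1 else 0

lemma two_smul_eccMatrix (hm : 2 ≤ m) (hr : ∀ i, 1 ≤ r i) :
    (2 : ℝ) • eccMatrix (starMixedExtension r) =
      vecMulVec weight weight - vecMulVec centerDifference centerDifference -
        (4 : ℝ) • ∑ i, vecMulVec (blockIndicator i) (blockIndicator i) := by
  ext (a | x) (b | y) <;>
    simp [eccMatrix_inl_inl hm hr, eccMatrix_inl_inr hm hr, eccMatrix_inr_inl hm hr,
      eccMatrix_inr_inr hm hr, weight, centerDifference, blockIndicator, vecMulVec_apply,
      Matrix.sum_apply]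
  · fin_cases a <;> fin_cases b <;> norm_num
  · split_ifs <;> norm_num

lemma dotProduct_eccMatrix_mulVec_nonpos (hm : 2 ≤ m) (hr : ∀ i, 1 ≤ r i)
    (z : Fin 2 ⊕ (Σ i : Fin m, Fin (r i)) → ℝ) (hz : weight ⬝ᵥ z = 0) :
    z ⬝ᵥ (eccMatrix (starMixedExtension r) *ᵥ z) ≤ 0 := by
  have key : 2 * (z ⬝ᵥ (eccMatrix (starMixedExtension r) *ᵥ z)) =
      (weight ⬝ᵥ z) ^ 2 - (centerDifference ⬝ᵥ z) ^ 2 -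
        4 * ∑ i, (blockIndicator i ⬝ᵥ z) ^ 2 := by
    rw [← smul_eq_mul, ← dotProduct_smul, ← smul_mulVec, two_smul_eccMatrix hm hr]
    simp only [sub_mulVec, smul_mulVec, sum_mulVec, dotProduct_sub, dotProduct_smul,
      dotProduct_sum, dotProduct_vecMulVec_self_mulVec, smul_eq_mul]
  have hblocks := Finset.sum_nonneg fun i (_ : i ∈ Finset.univ) =>
    sq_nonneg (blockIndicator (r := r) i ⬝ᵥ z)
  nlinarith [sq_nonneg (centerDifference ⬝ᵥ z)]

lemma eccMatrix_ne_zero (hm : 2 ≤ m) (hr : ∀ i, 1 ≤ r i) :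
    eccMatrix (starMixedExtension r) ≠ 0 := fun h => by
  simpa [eccMatrix_inl_inr hm hr] using
    congrFun (congrFun h (inl 0)) (inr ⟨⟨0, by omega⟩, ⟨0, hr _⟩⟩)

end starMixedExtension

/-- for `k ≥ 4`, the join of `K₂` with the disjoint union of cliques of
sizes `r 0, …, r (k-2)` (a mixed extension of `S_k` of type `(2, r₂, …, r_k)`) has
exactly one positive eccentricity eigenvalue. -/
theorem stmt15 (k : ℕ) (hk : 4 ≤ k) (r : Fin (k - 1) → ℕ) (hr : ∀ i, 1 ≤ r i) :
    posEigCount (eccMatrix_isHermitian (graphJoin (⊤ : SimpleGraph (Fin 2))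
      (blocksGraph r (fun _ => True)))) = 1 := by
  have hm : 2 ≤ k - 1 := by omega
  have hA := eccMatrix_isHermitian (starMixedExtension r)
  exact le_antisymm
    (hA.posEigCount_le_one_of_nonpos_on_hyperplane starMixedExtension.weight
      (starMixedExtension.dotProduct_eccMatrix_mulVec_nonpos hm hr))
    (hA.posEigCount_pos_of_trace_eq_zero (starMixedExtension.eccMatrix_ne_zero hm hr)
      (trace_eccMatrix _))
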